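/- arXiv:2305.14762 — 2 statements merged into one kernel-verified Lean document; each statement's English description precedes it below -/
import Mathlib

section
/- For n ≥ 2, the logic NA_{0,n} does not prove ¬□^{n+1}⊥. -/
inductive Formula : Type
  | bot : Formula
  | var : ℕ → Formula
  | neg : Formula → Formula
  | or : Formula → Formula → Formula
  | box : Formula → Formula
  deriving DecidableEq

namespace Formula

def imp (φ ψ : Formula) : Formula := .or (.neg φ) ψ

def and (φ ψ : Formula) : Formula := .neg (.or (.neg φ) (.neg ψ))

/-- □^n φ -/
def boxn : ℕ → Formula → Formula
  | 0, φ => φ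
  | k+1, φ => .box (boxn k φ)

/-- the set of subformulas -/
def sub : Formula → Finset Formula
  | .bot => {.bot}
  | .var p => {.var p}
  | .neg φ => insert (.neg φ) φ.sub
  | .or φ ψ => insert (.or φ ψ) (φ.sub ∪ ψ.sub)
  | .box φ => insert (.box φ) φ.sub

/-- ∼ρ -/
def negg : Formula → Formula
  | .neg φ => φ
  | φ => .neg φ

end Formula

def NSub (ψ : Formula) : Finset Formula := ψ.sub ∪ ψ.sub.image Formula.negg

/-- boolean evaluation treating boxed formulas and variables as atoms -/
def evalP (v : Formula → Bool) : Formula → Bool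
  | .bot => false
  | .var p => v (.var p)
  | .neg φ => !(evalP v φ)
  | .or φ ψ => evalP v φ || evalP v ψ
  | .box φ => v (.box φ)

/-- propositional tautologies in the modal language -/
def Tautology (φ : Formula) : Prop := ∀ v, evalP v φ = true

/-- Provability in NA_{m,n} (ros = false) and NRA_{m,n} (ros = true):
    propositional tautologies, the scheme □^n φ → □^m φ, modus ponens,
    necessitation, and (if ros) the rule Ros^□ : ¬□φ / ¬□□φ. -/
inductive Prov (m n : ℕ) (ros : Bool) : Formula → Prop
  | taut {φ} : Tautology φ → Prov m n ros φ
  | axA (φ) : Prov m n ros ((Formula.boxn n φ).imp (Formula.boxn m φ))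
  | mp {φ ψ} : Prov m n ros (φ.imp ψ) → Prov m n ros φ → Prov m n ros ψ
  | nec {φ} : Prov m n ros φ → Prov m n ros (.box φ)
  | ros {φ} : ros = true → Prov m n ros (.neg (.box φ)) →
      Prov m n ros (.neg (.box (.box φ)))

/-- An N-frame on world set W: a binary relation R_φ for each formula φ. -/
abbrev NFrame (W : Type) := Formula → W → W → Prop

structure NModel (W : Type) where
  Rel : NFrame W
  V : W → ℕ → Prop

/-- satisfaction in an N-model -/
def Sat {W : Type} (M : NModel W) : W → Formula → Prop
  | _, .bot => False
  | w, .var p => M.V w p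
  | w, .neg φ => ¬ Sat M w φ
  | w, .or φ ψ => Sat M w φ ∨ Sat M w ψ
  | w, .box φ => ∀ w', M.Rel φ w w' → Sat M w' φ

/-- x R_φ^k y : there is a φ-path of length k from x to y -/
def FPath {W : Type} (R : NFrame W) (φ : Formula) : ℕ → W → W → Prop
  | 0, x, y => x = y
  | k+1, x, y => ∃ w, R (Formula.boxn k φ) x w ∧ FPath R φ k w y

/-- (m,n)-accessibility for φ -/
def AccFor {W : Type} (R : NFrame W) (m n : ℕ) (φ : Formula) : Prop :=
  ∀ x y, FPath R φ m x y → FPath R φ n x y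

/-- Γ-(m,n)-accessibility -/
def SubAcc {W : Type} (R : NFrame W) (m n : ℕ) (Γ : Finset Formula) : Prop :=
  ∀ φ, Formula.boxn m φ ∈ Γ → AccFor R m n φ

/-- (m,n)-accessibility -/
def Accessible {W : Type} (R : NFrame W) (m n : ℕ) : Prop :=
  ∀ φ, AccFor R m n φ

def ValidM {W : Type} (M : NModel W) (ψ : Formula) : Prop := ∀ w, Sat M w ψ

def ValidF {W : Type} (R : NFrame W) (ψ : Formula) : Prop :=
  ∀ V : W → ℕ → Prop, ValidM ⟨R, V⟩ ψ

/-!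
Soundness for N-models reduces the claim to a model of `□^n φ → φ` in which `□^{n+1}⊥` holds
somewhere. Take worlds `a`, `b`, where `b` sees every world under every `R_φ`, `a` never sees
itself, and `a R_φ b` holds exactly when `φ = □^{n-1} ψ` with `ψ` false at `a`; this is a
recursion on `ψ`, as the truth of `ψ` at `a` only involves `R_χ` for subformulas `□χ` of `ψ`.
Then `a ⊩ □^n ψ` with `ψ` false at `a` would put `□^{n-1} ψ` at `b`, hence `ψ` at `a` since
`n ≥ 2`. On the other hand `□^n ⊥ = □^{n-1} □⊥` and `□⊥` holds at `a` (`⊥` is not of the form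
`□^{n-1} ψ`), so `a` has no `R_{□^n ⊥}`-successor: `a ⊩ □^{n+1} ⊥`.
-/

namespace Formula

theorem boxn_succ_right (k : ℕ) (φ : Formula) : boxn (k + 1) φ = boxn k (.box φ) := by
  induction k with
  | zero => rfl
  | succ k ih => exact congrArg box ih

theorem boxn_injective (k : ℕ) : Function.Injective (boxn k) := by
  induction k with
  | zero => exact fun _ _ h => h
  | succ k ih => exact fun _ _ h => ih (box.inj h)

theorem sizeOf_le_sizeOf_boxn (k : ℕ) (φ : Formula) : sizeOf φ + k ≤ sizeOf (boxn k φ) := by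
  induction k with
  | zero => simp [boxn]
  | succ k ih => simp only [boxn, box.sizeOf_spec]; omega

end Formula

open Formula

section Semantics

variable {W : Type} (M : NModel W)

theorem sat_imp (w : W) (φ ψ : Formula) : Sat M w (φ.imp ψ) ↔ (Sat M w φ → Sat M w ψ) := by
  simp only [imp, Sat]
  tauto

open Classical in
theorem sat_iff_evalP (w : W) (φ : Formula) :
    Sat M w φ ↔ evalP (fun χ => decide (Sat M w χ)) φ = true := by
  induction φ with
  | bot => simp [Sat, evalP]
  | var p => exact decide_eq_true_iff.symm
  | neg φ ih => simp [Sat, evalP, ih]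
  | or φ ψ ihφ ihψ => simp [Sat, evalP, ihφ, ihψ]
  | box φ => simp [evalP]

theorem Tautology.validM {φ : Formula} (h : Tautology φ) : ValidM M φ :=
  fun w => (sat_iff_evalP M w φ).2 (h _)

theorem Prov.validM_of_validM_axA {m n : ℕ}
    (hA : ∀ φ, ValidM M ((boxn n φ).imp (boxn m φ))) {φ : Formula}
    (h : Prov m n false φ) : ValidM M φ := by
  induction h with
  | taut h => exact h.validM M
  | axA φ => exact hA φ
  | mp _ _ ihImp ih => exact fun w => (sat_imp M w _ _).1 (ihImp w) (ih w)
  | nec _ ih => exact fun _ w _ => ih w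
  | ros hros => exact absurd hros Bool.false_ne_true

end Semantics

namespace TwoPointModel

inductive World
  | a
  | b

/-- `refuted m ψ` is the paper's `a R_{□^{m+1} ψ} b` for `NA_{0,m+2}`; by `refuted_iff` it
means that `ψ` fails at `a`. -/
def refuted (m : ℕ) : Formula → Prop
  | .bot => True
  | .var _ => False
  | .neg ψ => ¬ refuted m ψ
  | .or ψ₁ ψ₂ => refuted m ψ₁ ∧ refuted m ψ₂
  | .box φ => ∃ ψ, ∃ _ : φ = boxn (m + 1) ψ, refuted m ψ
termination_by φ => sizeOf φ
decreasing_by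
  all_goals subst_vars; simp only [neg.sizeOf_spec, or.sizeOf_spec, box.sizeOf_spec]; try omega
  grind [sizeOf_le_sizeOf_boxn]

def model (m : ℕ) : NModel World where
  Rel φ x y := x = .b ∨ (y = .b ∧ refuted m (.box φ))
  V _ _ := True

variable {m : ℕ}

theorem refuted_box (φ : Formula) :
    refuted m (.box φ) ↔ ∃ ψ, ∃ _ : φ = boxn (m + 1) ψ, refuted m ψ := by
  rw [refuted]

theorem refuted_box_boxn (ψ : Formula) : refuted m (.box (boxn (m + 1) ψ)) ↔ refuted m ψ := by
  rw [refuted_box]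
  exact ⟨fun ⟨_, h, hψ⟩ => boxn_injective _ h ▸ hψ, fun hψ => ⟨ψ, rfl, hψ⟩⟩

theorem sat_of_sat_b_boxn_succ {k : ℕ} {ψ : Formula} (h : Sat (model m) .b (boxn (k + 1) ψ))
    (w : World) : Sat (model m) w ψ := by
  induction k with
  | zero => exact h w (.inl rfl)
  | succ k ih => exact ih (h .b (.inl rfl))

theorem sat_a_box (φ : Formula) :
    Sat (model m) .a (.box φ) ↔ (refuted m (.box φ) → Sat (model m) .b φ) := by
  refine ⟨fun h hφ => h .b (.inr ⟨rfl, hφ⟩), ?_⟩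
  rintro h _ (⟨⟨⟩⟩ | ⟨rfl, hφ⟩)
  exact h hφ

theorem refuted_iff (ψ : Formula) : refuted m ψ ↔ ¬ Sat (model m) .a ψ := by
  induction ψ using refuted.induct m with
  | case1 => simp [refuted, Sat]
  | case2 p => simp [refuted, Sat, model]
  | case3 ψ ih => rw [refuted, ih]; rfl
  | case4 ψ₁ ψ₂ ih₁ ih₂ => rw [refuted, ih₁, ih₂, Sat]; tauto
  | case5 φ ih =>
    rw [sat_a_box, Classical.not_imp, iff_self_and, refuted_box]
    rintro ⟨ψ, rfl, hψ⟩ hb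
    exact (ih ψ rfl).1 hψ (sat_of_sat_b_boxn_succ hb .a)

theorem sat_of_sat_boxn (ψ : Formula) (w : World) (h : Sat (model m) w (boxn (m + 2) ψ)) :
    Sat (model m) w ψ := by
  cases w with
  | b => exact sat_of_sat_b_boxn_succ h .b
  | a =>
    by_contra hψ
    have hb := (sat_a_box _).1 h ((refuted_box_boxn ψ).2 ((refuted_iff ψ).2 hψ))
    exact hψ (sat_of_sat_b_boxn_succ hb .a)

theorem sat_a_boxn_bot : Sat (model m) .a (boxn (m + 3) .bot) := by
  rw [boxn, sat_a_box, boxn_succ_right, refuted_box_boxn, refuted_box]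
  rintro ⟨_, ⟨⟩, _⟩

end TwoPointModel

open TwoPointModel

theorem stmt7 (n : ℕ) (hn : 2 ≤ n) :
    ¬ Prov 0 n false (.neg (Formula.boxn (n + 1) .bot)) := by
  obtain ⟨m, rfl⟩ : ∃ m, n = m + 2 := ⟨n - 2, by omega⟩
  have hA (ψ : Formula) : ValidM (model m) ((boxn (m + 2) ψ).imp (boxn 0 ψ)) :=
    fun w => (sat_imp _ w _ _).2 (sat_of_sat_boxn ψ w)
  exact fun h => Prov.validM_of_validM_axA (model m) hA h .a sat_a_boxn_bot
end

section
/- Truth Lemma: For the canonical model of NRA_{m,n} relative to ψ, every world X and every ρ ∈ NSub(ψ) satisfy: X ⊩ ρ if and only if ρ ∈ X. -/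
/-- X is ψ-maximal NRA_{m,n}-consistent subset of NSub(ψ) -/
def MaxCons (m n : ℕ) (ψ : Formula) (X : Finset Formula) : Prop :=
  X ⊆ NSub ψ ∧ (∀ ρ ∈ NSub ψ, ρ ∈ X ∨ ρ.negg ∈ X) ∧
    ¬ Prov m n true (.neg (X.toList.foldr Formula.and (.neg .bot)))

/-- worlds of the canonical model -/
def CanW (m n : ℕ) (ψ : Formula) : Type :=
  {X : Finset Formula // MaxCons m n ψ X}

/-- canonical relations -/
def CanR (m n : ℕ) (ψ : Formula) : NFrame (CanW m n ψ) :=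
  fun φ X Y => Formula.box φ ∉ X.val ∨ φ ∈ Y.val

/-- canonical model -/
def CanM (m n : ℕ) (ψ : Formula) : NModel (CanW m n ψ) :=
  ⟨CanR m n ψ, fun X p => Formula.var p ∈ X.val⟩


section Helpers

open Formula

/-! ### Subformula lemmas -/

lemma mem_sub_self (φ : Formula) : φ ∈ φ.sub := by
  cases φ <;> simp [Formula.sub]

lemma sub_trans : ∀ ψ τ : Formula, τ ∈ ψ.sub → τ.sub ⊆ ψ.sub := by
  intro ψ
  induction ψ with
  | bot => intro τ h; simp [Formula.sub] at h; subst h; simp [Formula.sub]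
  | var p => intro τ h; simp [Formula.sub] at h; subst h; simp [Formula.sub]
  | neg φ ih =>
      intro τ h
      simp [Formula.sub] at h
      rcases h with h | h
      · subst h; exact Finset.Subset.refl _
      · exact (ih τ h).trans (by simp [Formula.sub])
  | or φ χ ih1 ih2 =>
      intro τ h
      simp [Formula.sub] at h
      rcases h with h | h | h
      · subst h; exact Finset.Subset.refl _
      · exact (ih1 τ h).trans (by intro x hx; simp [Formula.sub]; right; left; exact hx)
      · exact (ih2 τ h).trans (by intro x hx; simp [Formula.sub]; right; right; exact hx)
  | box φ ih =>
      intro τ h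
      simp [Formula.sub] at h
      rcases h with h | h
      · subst h; exact Finset.Subset.refl _
      · exact (ih τ h).trans (by simp [Formula.sub])

lemma neg_mem_sub {ψ φ : Formula} (h : Formula.neg φ ∈ ψ.sub) : φ ∈ ψ.sub :=
  sub_trans ψ _ h (by simp [Formula.sub, mem_sub_self])

lemma box_mem_sub {ψ φ : Formula} (h : Formula.box φ ∈ ψ.sub) : φ ∈ ψ.sub :=
  sub_trans ψ _ h (by simp [Formula.sub, mem_sub_self])

lemma or_left_mem_sub {ψ φ χ : Formula} (h : Formula.or φ χ ∈ ψ.sub) : φ ∈ ψ.sub :=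
  sub_trans ψ _ h (by simp [Formula.sub, mem_sub_self])

lemma or_right_mem_sub {ψ φ χ : Formula} (h : Formula.or φ χ ∈ ψ.sub) : χ ∈ ψ.sub :=
  sub_trans ψ _ h (by simp [Formula.sub, mem_sub_self])

lemma sub_subset_NSub (ψ : Formula) : ψ.sub ⊆ NSub ψ := Finset.subset_union_left

lemma mem_NSub_iff {ψ ρ : Formula} :
    ρ ∈ NSub ψ ↔ ρ ∈ ψ.sub ∨ ∃ σ ∈ ψ.sub, σ.negg = ρ := by
  simp [NSub]

lemma negg_mem_NSub {ψ ρ : Formula} (h : ρ ∈ NSub ψ) : ρ.negg ∈ NSub ψ := by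
  rw [mem_NSub_iff] at h ⊢
  rcases h with h | ⟨σ, hσ, rfl⟩
  · exact Or.inr ⟨ρ, h, rfl⟩
  · cases σ with
    | neg τ => exact Or.inr ⟨τ, neg_mem_sub hσ, rfl⟩
    | bot => exact Or.inl hσ
    | var p => exact Or.inl hσ
    | or a b => exact Or.inl hσ
    | box a => exact Or.inl hσ

/-- non-negation formulas in `NSub ψ` are in `sub ψ` -/
lemma box_mem_of_NSub {ψ φ : Formula} (h : Formula.box φ ∈ NSub ψ) :
    Formula.box φ ∈ ψ.sub := by
  rw [mem_NSub_iff] at h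
  rcases h with h | ⟨σ, hσ, hn⟩
  · exact h
  · cases σ with
    | neg τ => simp [Formula.negg] at hn; subst hn; exact neg_mem_sub hσ
    | bot => simp [Formula.negg] at hn
    | var p => simp [Formula.negg] at hn
    | or a b => simp [Formula.negg] at hn
    | box a => simp [Formula.negg] at hn

lemma or_mem_of_NSub {ψ φ χ : Formula} (h : Formula.or φ χ ∈ NSub ψ) :
    Formula.or φ χ ∈ ψ.sub := by
  rw [mem_NSub_iff] at h
  rcases h with h | ⟨σ, hσ, hn⟩
  · exact h
  · cases σ with
    | neg τ => simp [Formula.negg] at hn; subst hn; exact neg_mem_sub hσ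
    | bot => simp [Formula.negg] at hn
    | var p => simp [Formula.negg] at hn
    | or a b => simp [Formula.negg] at hn
    | box a => simp [Formula.negg] at hn

lemma neg_mem_of_NSub {ψ φ : Formula} (h : Formula.neg φ ∈ NSub ψ) :
    φ ∈ ψ.sub := by
  rw [mem_NSub_iff] at h
  rcases h with h | ⟨σ, hσ, hn⟩
  · exact neg_mem_sub h
  · cases σ with
    | neg τ => simp [Formula.negg] at hn; subst hn; exact neg_mem_sub (neg_mem_sub hσ)
    | bot => simp [Formula.negg] at hn; subst hn; exact hσ
    | var p => simp [Formula.negg] at hn; subst hn; exact hσ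
    | or a b => simp [Formula.negg] at hn; subst hn; exact hσ
    | box a => simp [Formula.negg] at hn; subst hn; exact hσ

/-! ### Propositional evaluation lemmas -/

lemma evalP_negg (v : Formula → Bool) (φ : Formula) :
    evalP v φ.negg = !evalP v φ := by
  cases φ <;> simp [Formula.negg, evalP]

noncomputable def conj (X : Finset Formula) : Formula := X.toList.foldr Formula.and (.neg .bot)

lemma evalP_foldr (v : Formula → Bool) (L : List Formula) :
    evalP v (L.foldr Formula.and (.neg .bot)) = true ↔ ∀ φ ∈ L, evalP v φ = true := by
  induction L with
  | nil => simp [evalP]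
  | cons a L ih => simp [Formula.and, evalP, ih]

lemma evalP_conj (v : Formula → Bool) (X : Finset Formula) :
    evalP v (conj X) = true ↔ ∀ φ ∈ X, evalP v φ = true := by
  rw [conj, evalP_foldr]
  simp

/-! ### Consistency lemmas -/

/-- purely propositional inconsistency -/
lemma incon_of_sem (m n : ℕ) (X : Finset Formula)
    (h : ∀ v : Formula → Bool, ¬ ∀ φ ∈ X, evalP v φ = true) :
    Prov m n true (.neg (conj X)) := by
  apply Prov.taut
  intro v
  have := h v
  rw [← evalP_conj v X] at this
  simp [evalP]
  simpa using this

lemma incon_pair (m n : ℕ) (X : Finset Formula) (φ : Formula)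
    (h1 : φ ∈ X) (h2 : φ.negg ∈ X) : Prov m n true (.neg (conj X)) := by
  apply incon_of_sem
  intro v hall
  have := hall φ h1
  have := hall _ h2
  rw [evalP_negg] at this
  simp_all

lemma incon_of_both (m n : ℕ) (X : Finset Formula) (ρ : Formula)
    (h1 : Prov m n true (.neg (conj (insert ρ X))))
    (h2 : Prov m n true (.neg (conj (insert ρ.negg X)))) :
    Prov m n true (.neg (conj X)) := by
  have t : Tautology ((Formula.neg (conj (insert ρ X))).imp
      ((Formula.neg (conj (insert ρ.negg X))).imp (.neg (conj X)))) := by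
    intro v
    simp only [Formula.imp, evalP, Bool.or_eq_true, Bool.not_eq_true', Bool.not_not]
    by_cases hC : evalP v (conj X) = true
    · by_cases hρ : evalP v ρ = true
      · left
        rw [evalP_conj] at hC ⊢
        intro φ hφ
        rcases Finset.mem_insert.mp hφ with rfl | hφ
        · exact hρ
        · exact hC φ hφ
      · right; left
        rw [evalP_conj] at hC ⊢
        intro φ hφ
        rcases Finset.mem_insert.mp hφ with rfl | hφ
        · rw [evalP_negg]; simp [hρ]
        · exact hC φ hφ
    · right; right; simpa using hC
  exact Prov.mp (Prov.mp (Prov.taut t) h1) h2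

lemma prov_of_incon_negg (m n : ℕ) (φ : Formula)
    (h : Prov m n true (.neg (conj {φ.negg}))) : Prov m n true φ := by
  have t : Tautology ((Formula.neg (conj {φ.negg})).imp φ) := by
    intro v
    simp only [Formula.imp, evalP, Bool.or_eq_true, Bool.not_eq_true', Bool.not_not]
    by_cases hφ : evalP v φ = true
    · right; exact hφ
    · left
      rw [evalP_conj]
      intro χ hχ
      rw [Finset.mem_singleton] at hχ
      subst hχ
      rw [evalP_negg]
      simp [hφ]
  exact Prov.mp (Prov.taut t) h

lemma incon_of_prov_box (m n : ℕ) (X : Finset Formula) (φ : Formula)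
    (hmem : Formula.neg (Formula.box φ) ∈ X)
    (hp : Prov m n true (.box φ)) : Prov m n true (.neg (conj X)) := by
  have t : Tautology ((Formula.box φ).imp (.neg (conj X))) := by
    intro v
    simp only [Formula.imp, evalP, Bool.or_eq_true, Bool.not_eq_true', Bool.not_not]
    by_cases hC : evalP v (conj X) = true
    · left
      rw [evalP_conj] at hC
      have := hC _ hmem
      simpa [evalP] using this
    · right; simpa using hC
  exact Prov.mp (Prov.taut t) hp

/-! ### Lindenbaum -/

lemma lindenbaum_aux (m n : ℕ) (ψ : Formula) :
    ∀ k (S : Finset Formula), S ⊆ NSub ψ →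
      ¬ Prov m n true (.neg (conj S)) → (NSub ψ).card - S.card ≤ k →
      ∃ X : Finset Formula, MaxCons m n ψ X ∧ S ⊆ X := by
  intro k
  induction k with
  | zero =>
      intro S hsub hcons hcard
      have : S = NSub ψ := Finset.eq_of_subset_of_card_le hsub (by omega)
      refine ⟨S, ⟨hsub, ?_, hcons⟩, le_refl _⟩
      intro ρ hρ
      rw [this]; exact Or.inl hρ
  | succ k ih =>
      intro S hsub hcons hcard
      by_cases hmax : ∀ ρ ∈ NSub ψ, ρ ∈ S ∨ ρ.negg ∈ S
      · exact ⟨S, ⟨hsub, hmax, hcons⟩, le_refl _⟩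
      · push_neg at hmax
        obtain ⟨ρ, hρN, hρ1, hρ2⟩ := hmax
        have hcard1 : S.card < (NSub ψ).card :=
          Finset.card_lt_card (Finset.ssubset_iff_of_subset hsub |>.mpr ⟨ρ, hρN, hρ1⟩)
        have hone : ¬ Prov m n true (.neg (conj (insert ρ S))) ∨
            ¬ Prov m n true (.neg (conj (insert ρ.negg S))) := by
          by_contra hc
          push_neg at hc
          exact hcons (incon_of_both m n S ρ hc.1 hc.2)
        rcases hone with hone | hone
        · obtain ⟨X, hX, hSX⟩ := ih (insert ρ S)
            (Finset.insert_subset hρN hsub) hone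
            (by rw [Finset.card_insert_of_notMem hρ1]; omega)
          exact ⟨X, hX, (Finset.subset_insert _ _).trans hSX⟩
        · obtain ⟨X, hX, hSX⟩ := ih (insert ρ.negg S)
            (Finset.insert_subset (negg_mem_NSub hρN) hsub) hone
            (by rw [Finset.card_insert_of_notMem hρ2]; omega)
          exact ⟨X, hX, (Finset.subset_insert _ _).trans hSX⟩

lemma lindenbaum (m n : ℕ) (ψ : Formula) (S : Finset Formula) (hsub : S ⊆ NSub ψ)
    (hcons : ¬ Prov m n true (.neg (conj S))) :
    ∃ X : Finset Formula, MaxCons m n ψ X ∧ S ⊆ X :=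
  lindenbaum_aux m n ψ (NSub ψ).card S hsub hcons (by omega)

end Helpers

theorem stmt12 (m n : ℕ) (ψ : Formula) (ρ : Formula) (hρ : ρ ∈ NSub ψ)
    (X : CanW m n ψ) :
    Sat (CanM m n ψ) X ρ ↔ ρ ∈ X.val := by
  induction ρ generalizing X with
  | bot =>
      obtain ⟨hsub, hmax, hcons⟩ := X.2
      simp only [Sat]
      constructor
      · exact False.elim
      · intro hb
        exact absurd (incon_of_sem m n X.val
          (fun v hall => by simpa [evalP] using hall _ hb)) hcons
  | var p =>
      simp [Sat, CanM]
  | neg φ ih =>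
      obtain ⟨hsub, hmax, hcons⟩ := X.2
      have hφ : φ ∈ NSub ψ := sub_subset_NSub ψ (neg_mem_of_NSub hρ)
      simp only [Sat, ih hφ X]
      constructor
      · intro h
        rcases hmax _ hρ with h' | h'
        · exact h'
        · exact absurd h' h
      · intro h hc
        exact hcons (incon_pair m n X.val (Formula.neg φ) h (by simpa [Formula.negg] using hc))
  | or φ χ ih1 ih2 =>
      obtain ⟨hsub, hmax, hcons⟩ := X.2
      have hor : Formula.or φ χ ∈ ψ.sub := or_mem_of_NSub hρ
      have hφ : φ ∈ NSub ψ := sub_subset_NSub ψ (or_left_mem_sub hor)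
      have hχ : χ ∈ NSub ψ := sub_subset_NSub ψ (or_right_mem_sub hor)
      simp only [Sat, ih1 hφ X, ih2 hχ X]
      constructor
      · rintro (h | h)
        · rcases hmax _ hρ with h' | h'
          · exact h'
          · exfalso
            apply hcons
            apply incon_of_sem m n X.val
            intro v hall
            have e1 := hall _ h
            have e2 := hall _ h'
            rw [evalP_negg] at e2
            simp [evalP, e1] at e2
        · rcases hmax _ hρ with h' | h'
          · exact h'
          · exfalso
            apply hcons
            apply incon_of_sem m n X.val
            intro v hall
            have e1 := hall _ h
            have e2 := hall _ h'
            rw [evalP_negg] at e2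
            simp [evalP, e1] at e2
      · intro h
        by_contra hc
        push_neg at hc
        obtain ⟨h1, h2⟩ := hc
        have n1 : φ.negg ∈ X.val := (hmax _ hφ).resolve_left h1
        have n2 : χ.negg ∈ X.val := (hmax _ hχ).resolve_left h2
        apply hcons
        apply incon_of_sem m n X.val
        intro v hall
        have e0 := hall _ h
        have e1 := hall _ n1
        have e2 := hall _ n2
        rw [evalP_negg] at e1 e2
        simp only [evalP, Bool.or_eq_true] at e0
        simp_all
  | box φ ih =>
      obtain ⟨hsub, hmax, hcons⟩ := X.2
      have hbox : Formula.box φ ∈ ψ.sub := box_mem_of_NSub hρ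
      have hφ : φ ∈ NSub ψ := sub_subset_NSub ψ (box_mem_sub hbox)
      constructor
      · intro hS
        by_contra hmem
        have hnb : Formula.neg (Formula.box φ) ∈ X.val := by
          have := (hmax _ hρ).resolve_left hmem
          simpa [Formula.negg] using this
        -- {∼φ} is consistent
        have hconsneg : ¬ Prov m n true (.neg (conj {φ.negg})) := by
          intro hpr
          have hpφ : Prov m n true φ := prov_of_incon_negg m n φ hpr
          exact hcons (incon_of_prov_box m n X.val φ hnb (Prov.nec hpφ))
        obtain ⟨Y, hY, hSY⟩ := lindenbaum m n ψ {φ.negg}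
          (Finset.singleton_subset_iff.mpr (negg_mem_NSub hφ)) hconsneg
        set Yw : CanW m n ψ := ⟨Y, hY⟩
        have hR : CanR m n ψ φ X Yw := Or.inl hmem
        have hSat := hS Yw hR
        rw [ih hφ Yw] at hSat
        obtain ⟨_, _, hYcons⟩ := hY
        exact hYcons (incon_pair m n Y φ hSat (hSY (Finset.mem_singleton_self _)))
      · intro hmem Y hR
        rcases hR with hR | hR
        · exact absurd hmem hR
        · exact (ih hφ Y).mpr hR
end
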